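/- arXiv:1902.02398 — 4 statements merged into one kernel-verified Lean document; each statement's English description precedes it below -/
import Mathlib

section
/- Let p be a real polynomial of degree d ≥ 1 with |p(x)| ≤ 1 for all integers x ∈ {0, 1, ..., k}, where k ≥ 1. If max_{x ∈ [0,k]} |p(x)| ≥ 1.001, then d ≥ sqrt(0.001 k / 2.002). -/
/-!
Markov's inequality at the endpoint, `|q'(1)| ≤ n² max_{[-1,1]} |q|` for `deg q ≤ n`, is Mathlib's
extremal property of the Chebyshev polynomial `Tₙ` (whose derivative at `1` is `n²`). Applied on a
subinterval of `[0, k]` of length `k / 2` ending at `t`, it gives `k |p'(t)| ≤ 4 d² M` on all of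
`[0, k]`, where `M = max_{[0,k]} |p|`. A point where `|p| = M` lies within `1/2` of an integer
`j ≤ k`, where `|p(j)| ≤ 1`, so the mean value inequality gives `k (M - 1) ≤ 2 d² M`; as
`M ≥ 1.001`, this forces `d² ≥ 0.001 k / 2.002`.
-/

open Polynomial Set

theorem exists_nat_le_abs_sub_le_half {x : ℝ} {k : ℕ} (hx : x ∈ Icc (0 : ℝ) k) :
    ∃ j : ℕ, j ≤ k ∧ |x - j| ≤ 1 / 2 := by
  have h₀ : 0 ≤ x + 1 / 2 := by linarith [hx.1]
  refine ⟨⌊x + 1 / 2⌋₊, Nat.lt_succ_iff.1 ((Nat.floor_lt h₀).2 ?_), abs_le.2 ⟨?_, ?_⟩⟩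
  · push_cast; linarith [hx.2]
  · linarith [Nat.floor_le h₀]
  · linarith [Nat.lt_floor_add_one (x + 1 / 2)]

namespace Polynomial

variable {P : ℝ[X]} {n : ℕ} {M : ℝ}

theorem abs_derivative_eval_one_le (hP : P.natDegree ≤ n) (hM : 0 < M)
    (hPM : ∀ x ∈ Icc (-1 : ℝ) 1, |P.eval x| ≤ M) :
    |P.derivative.eval 1| ≤ n ^ 2 * M := by
  have markov {Q : ℝ[X]} (hQ : Q.natDegree ≤ n) (hQM : ∀ x ∈ Icc (-1 : ℝ) 1, |Q.eval x| ≤ M) :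
      Q.derivative.eval 1 ≤ n ^ 2 * M := by
    have h := Chebyshev.eval_iterate_derivative_le_of_forall_abs_le_one (k := 1) le_rfl
      (degree_le_of_natDegree_le ((natDegree_C_mul_le M⁻¹ Q).trans hQ))
      (fun x hx => by
        rw [eval_C_mul, abs_mul, abs_inv, abs_of_pos hM]
        exact inv_mul_le_one_of_le₀ (hQM x hx) hM.le)
    rw [Function.iterate_one, derivative_C_mul, eval_C_mul,
      Chebyshev.derivative_T_eval_one, inv_mul_le_iff₀ hM] at h
    exact_mod_cast h.trans_eq (mul_comm _ _)
  refine abs_le.2 ⟨?_, markov hP hPM⟩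
  have h := markov (Q := -P) (natDegree_neg P ▸ hP) (fun x hx => by simpa using hPM x hx)
  rw [derivative_neg, eval_neg] at h
  linarith

theorem abs_mul_abs_derivative_eval_add_le (hP : P.natDegree ≤ n) (hM : 0 < M) (x c : ℝ)
    (hPM : ∀ s ∈ Icc (-1 : ℝ) 1, |P.eval (x + c * s)| ≤ M) :
    |c| * |P.derivative.eval (x + c)| ≤ n ^ 2 * M := by
  have hQ : (P.comp (C x + C c * X)).natDegree ≤ n :=
    natDegree_comp_le.trans (by
      grw [hP, natDegree_add_le, natDegree_C, natDegree_C_mul_le, natDegree_X]; simp)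
  have hQ' : (P.comp (C x + C c * X)).derivative.eval 1 = c * P.derivative.eval (x + c) := by
    simp [derivative_comp]
  rw [← abs_mul, ← hQ']
  exact abs_derivative_eval_one_le hQ hM fun s hs => by simpa using hPM s hs

theorem sub_mul_abs_derivative_eval_le (hP : P.natDegree ≤ n) (hM : 0 < M) {a b t : ℝ}
    (ht : t ∈ Icc a b) (hPM : ∀ x ∈ Icc a b, |P.eval x| ≤ M) :
    (b - a) * |P.derivative.eval t| ≤ 4 * n ^ 2 * M := by
  obtain ⟨hat, htb⟩ := ht
  obtain ⟨h, rfl⟩ : ∃ h, b = a + 4 * h := ⟨(b - a) / 4, by ring⟩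
  have hh : 0 ≤ h := by linarith
  suffices h * |P.derivative.eval t| ≤ n ^ 2 * M by linarith
  -- use the subinterval of length `2h` having `t` as an endpoint
  rcases le_total t (a + 2 * h) with hmid | hmid
  · have := abs_mul_abs_derivative_eval_add_le hP hM (t + h) (-h) fun s ⟨hs₁, hs₂⟩ =>
      hPM _ ⟨by nlinarith, by nlinarith⟩
    rwa [abs_neg, abs_of_nonneg hh, add_neg_cancel_right] at this
  · have := abs_mul_abs_derivative_eval_add_le hP hM (t - h) h fun s ⟨hs₁, hs₂⟩ =>
      hPM _ ⟨by nlinarith, by nlinarith⟩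
    rwa [abs_of_nonneg hh, sub_add_cancel] at this

theorem natCast_mul_abs_eval_sub_one_le {k : ℕ} (hP : P.natDegree ≤ n) (hM : 0 < M)
    (hPM : ∀ x ∈ Icc (0 : ℝ) k, |P.eval x| ≤ M)
    (hP₁ : ∀ j : ℕ, j ≤ k → |P.eval (j : ℝ)| ≤ 1) {x : ℝ} (hx : x ∈ Icc (0 : ℝ) k) :
    k * (|P.eval x| - 1) ≤ 2 * n ^ 2 * M := by
  obtain ⟨j, hjk, hxj⟩ := exists_nat_le_abs_sub_le_half hx
  have hj : (j : ℝ) ∈ Icc (0 : ℝ) k := ⟨j.cast_nonneg, by exact_mod_cast hjk⟩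
  have lipschitz : |k * P.eval x - k * P.eval (j : ℝ)| ≤ 4 * n ^ 2 * M * |x - j| :=
    Convex.norm_image_sub_le_of_norm_hasDerivWithin_le
      (fun t _ => ((P.hasDerivAt t).const_mul (k : ℝ)).hasDerivWithinAt)
      (fun t ht => by
        simpa [abs_mul] using sub_mul_abs_derivative_eval_le hP hM ht hPM) (convex_Icc _ _) hj hx
  have hk : (0 : ℝ) ≤ k := k.cast_nonneg
  calc k * (|P.eval x| - 1) ≤ k * |P.eval x - P.eval (j : ℝ)| := by
        gcongr
        linarith [abs_sub_abs_le_abs_sub (P.eval x) (P.eval (j : ℝ)), hP₁ j hjk]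
    _ = |k * P.eval x - k * P.eval (j : ℝ)| := by rw [← mul_sub, abs_mul, abs_of_nonneg hk]
    _ ≤ 4 * n ^ 2 * M * (1 / 2) := lipschitz.trans (by gcongr)
    _ = 2 * n ^ 2 * M := by ring

end Polynomial

theorem markov_corollary_general
    (p : Polynomial ℝ) (d k : ℕ)
    (hd : p.natDegree = d)
    (hbound : ∀ j : ℕ, j ≤ k → |p.eval (j : ℝ)| ≤ 1)
    (hbig : ∃ x ∈ Set.Icc (0 : ℝ) k, |p.eval x| ≥ 1.001) :
    (d : ℝ) ≥ Real.sqrt (0.001 * k / 2.002) := by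
  obtain ⟨x₀, hx₀, hmax⟩ := isCompact_Icc.exists_isMaxOn (nonempty_Icc.2 k.cast_nonneg)
    (p.continuous.abs.continuousOn : ContinuousOn (fun x => |p.eval x|) (Icc (0 : ℝ) k))
  obtain ⟨x, hx, hx_big⟩ := hbig
  have hM : 1.001 ≤ |p.eval x₀| := hx_big.trans (hmax hx)
  have key := natCast_mul_abs_eval_sub_one_le hd.le (by linarith) (fun y hy => hmax hy) hbound hx₀
  refine Real.sqrt_le_iff.2 ⟨d.cast_nonneg, ?_⟩
  rw [div_le_iff₀ (by norm_num)]
  nlinarith [k.cast_nonneg (α := ℝ)]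

/-- If `p` has degree `d ≥ 1`, is bounded by 1 in absolute value at all integers
`{0, 1, …, k}` (`k ≥ 1`), and attains absolute value at least `1.001` somewhere on `[0, k]`,
then `d ≥ sqrt(0.001·k / 2.002)`. -/
theorem markov_corollary
    (p : Polynomial ℝ) (d k : ℕ)
    (hd : p.natDegree = d) (hd1 : 1 ≤ d) (hk : 1 ≤ k)
    (hbound : ∀ j : ℕ, j ≤ k → |p.eval (j : ℝ)| ≤ 1)
    (hbig : ∃ x ∈ Set.Icc (0 : ℝ) k, |p.eval x| ≥ 1.001) :
    (d : ℝ) ≥ Real.sqrt (0.001 * k / 2.002) :=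
  markov_corollary_general p d k hd hbound hbig
end

section
/- Among all real polynomials p of degree at most d with |p(x)| ≤ 1 on [-1,1], the value |p(y)| for any fixed y > 1 is at most T_d(y), where T_d is the Chebyshev polynomial of the first kind. -/
open Polynomial Polynomial.Chebyshev

theorem Polynomial.Chebyshev.abs_eval_le_eval_T_of_forall_abs_le_one {n : ℕ} {P : ℝ[X]}
    {x : ℝ} (hx : 1 ≤ x) (hPdeg : P.degree ≤ n)
    (hPbnd : ∀ x ∈ Set.Icc (-1) 1, |P.eval x| ≤ 1) :
    |P.eval x| ≤ (T ℝ n).eval x := by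
  have hle {Q : ℝ[X]} (hQdeg : Q.degree ≤ n) (hQbnd : ∀ x ∈ Set.Icc (-1) 1, |Q.eval x| ≤ 1) :
      Q.eval x ≤ (T ℝ n).eval x :=
    eval_iterate_derivative_le_of_forall_abs_le_one (k := 0) hx hQdeg hQbnd
  have hneg : -P.eval x ≤ (T ℝ n).eval x := by
    simpa using hle (Q := -P) (by rwa [degree_neg]) (by simpa using hPbnd)
  exact abs_le.mpr ⟨neg_le.mp hneg, hle hPdeg hPbnd⟩

/-- **Extremal property of Chebyshev polynomials.** If `p` has degree at most `d` and
`|p(x)| ≤ 1` on `[-1, 1]`, then for any `y > 1`, `|p(y)| ≤ T_d(y)`. -/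
theorem chebyshev_extremal
    (p : Polynomial ℝ) (d : ℕ) (y : ℝ)
    (hd : p.natDegree ≤ d)
    (hbound : ∀ x ∈ Set.Icc (-1 : ℝ) 1, |p.eval x| ≤ 1)
    (hy : 1 < y) :
    |p.eval y| ≤ (Polynomial.Chebyshev.T ℝ d).eval y :=
  abs_eval_le_eval_T_of_forall_abs_le_one hy.le (degree_le_of_natDegree_le hd) hbound
end

section
/- Let w and N be positive integers with 2w ≤ N and N ≤ 4w³ (say), and let p(x,y) be a real bivariate polynomial of total degree d such that (1) p(2w, 2w) ≥ 2, and (2) 0 ≤ p(x,y) ≤ 1 for all integer points (x,y) with either (x,y) ∈ [2w,N]×[0,w] or (x,y) ∈ [0,w]×[2w,N]. Then d ≥ c·min{sqrt(w), sqrt(N/w)} for some absolute constant c > 0. -/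
/-!
Suppose `d ^ 2` is small compared with both `w` and `N / w`. Markov's inequality bounds the
derivative of `p` along horizontal and vertical lines, and since every real point of the two
rectangles lies within `1 / 2` of an integer point on such a line, `|p| ≤ 36 / 25` there.
The symmetrization `p(x, y) + p(y, x)` on the hyperbola `(2 w t, 2 w / t)` is a polynomial `r` of
degree `≤ d` in `s = t + t⁻¹`; for `2 ≤ t ≤ 8 d ^ 2 + 3` the hyperbola stays inside the rectangles,
so `|r| ≤ 72 / 25` on an `s`-interval of length `≥ 8 d ^ 2` starting at `5 / 2`. Comparison with the
Chebyshev polynomial `T_d` shows that `r` cannot grow by more than a factor `8 / 7` within distance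
`1 / 2` of such an interval, whereas `r(2) = 2 p(2 w, 2 w) ≥ 4 > (8 / 7) (72 / 25)`.
-/

open Polynomial Real Set

theorem Real.one_add_sq_div_two_le_cosh (x : ℝ) : 1 + x ^ 2 / 2 ≤ cosh x := by
  rw [← cosh_abs, ← sq_abs x]
  have h : |x| / 2 ≤ sinh (|x| / 2) := self_le_sinh_iff.2 (by positivity)
  have h2 : cosh |x| = 1 + 2 * sinh (|x| / 2) ^ 2 := by
    conv_lhs => rw [show |x| = 2 * (|x| / 2) by ring]
    rw [cosh_two_mul, cosh_sq']
    ring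
  rw [h2]
  nlinarith [abs_nonneg x]

theorem sq_lt_of_lt_min_sqrt {x w N : ℝ} (hx : 0 ≤ x) (hw : 0 < w) (h : x < min √w √(N / w)) :
    x ^ 2 < w ∧ x ^ 2 * w < N :=
  ⟨(lt_sqrt hx).1 (h.trans_le (min_le_left _ _)),
    (lt_div_iff₀ hw).1 ((lt_sqrt hx).1 (h.trans_le (min_le_right _ _)))⟩

theorem round_mem_Icc {a b : ℤ} {x : ℝ} (hx : x ∈ Icc (a : ℝ) b) : a ≤ round x ∧ round x ≤ b := by
  have := abs_le.1 (abs_sub_round x)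
  have h₁ : ((a - 1 : ℤ) : ℝ) < round x := by push_cast; linarith [hx.1]
  have h₂ : (round x : ℝ) < (b + 1 : ℤ) := by push_cast; linarith [hx.2]
  norm_cast at h₁ h₂
  omega

theorem pow_dist_add_inv_pow_dist {K : Type*} [Field K] {t : K} (ht : t ≠ 0) (i j : ℕ) :
    t ^ Nat.dist i j + t⁻¹ ^ Nat.dist i j = t ^ i * t⁻¹ ^ j + t⁻¹ ^ i * t ^ j := by
  wlog hji : j ≤ i generalizing i j
  · rw [Nat.dist_comm, this j i (by omega)]
    ring
  obtain ⟨k, rfl⟩ := Nat.exists_eq_add_of_le hji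
  rw [show Nat.dist (j + k) j = k by unfold Nat.dist; omega]
  have h : t ^ j * t⁻¹ ^ j = 1 := by rw [← mul_pow, mul_inv_cancel₀ ht, one_pow]
  linear_combination (-(t ^ k + t⁻¹ ^ k)) * h

namespace Polynomial

theorem natDegree_comp_linear_le {R : Type*} [CommSemiring R] {p : R[X]} {n : ℕ}
    (hp : p.natDegree ≤ n) (s e : R) : (p.comp (C s * X + C e)).natDegree ≤ n :=
  natDegree_comp_le.trans <| by
    simpa using Nat.mul_le_mul hp (natDegree_linear_le (a := s) (b := e))

theorem natDegree_dickson_one_one_le {R : Type*} [CommRing R] :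
    ∀ k : ℕ, (dickson 1 (1 : R) k).natDegree ≤ k
  | 0 => by norm_num [dickson_zero]
  | 1 => by rw [dickson_one]; exact natDegree_X_le
  | k + 2 => by
    rw [dickson_add_two]
    refine (natDegree_sub_le _ _).trans (max_le ?_ ?_)
    · refine natDegree_mul_le.trans ?_
      have := natDegree_dickson_one_one_le (R := R) (k + 1)
      have := natDegree_X_le (R := R)
      omega
    · exact (natDegree_C_mul_le _ _).trans ((natDegree_dickson_one_one_le k).trans (by omega))

theorem Chebyshev.T_real_eval_one_add_le_cosh (n : ℕ) {δ : ℝ} (hδ : 0 ≤ δ) :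
    (T ℝ n).eval (1 + δ) ≤ cosh (n * √(2 * δ)) := by
  have h1 : (1 : ℝ) ≤ 1 + δ := by linarith
  have hφ : arcosh (1 + δ) ≤ √(2 * δ) := by
    have : cosh (arcosh (1 + δ)) ≤ cosh √(2 * δ) := by
      rw [cosh_arcosh h1]
      have := one_add_sq_div_two_le_cosh √(2 * δ)
      rw [sq_sqrt (by positivity)] at this
      linarith
    rwa [cosh_le_cosh, abs_of_nonneg (arcosh_nonneg h1), abs_of_nonneg (sqrt_nonneg _)] at this
  rw [← cosh_arcosh h1, T_real_cosh, cosh_le_cosh, Int.cast_natCast,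
    abs_of_nonneg (mul_nonneg n.cast_nonneg (arcosh_nonneg h1)), abs_of_nonneg (by positivity)]
  gcongr

variable {n : ℕ} {q : ℝ[X]} {S : ℝ}

theorem abs_eval_iterate_derivative_le_of_forall_abs_le_one (k : ℕ) {x : ℝ} (hx : 1 ≤ x)
    (hq : q.natDegree ≤ n) (h : ∀ y ∈ Icc (-1 : ℝ) 1, |q.eval y| ≤ 1) :
    |(derivative^[k] q).eval x| ≤ (derivative^[k] (Chebyshev.T ℝ n)).eval x := by
  have hdeg : q.degree ≤ n := degree_le_of_natDegree_le hq
  refine abs_le.2 ⟨?_, Chebyshev.eval_iterate_derivative_le_of_forall_abs_le_one hx hdeg h⟩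
  have := Chebyshev.eval_iterate_derivative_le_of_forall_abs_le_one (k := k) hx
    (P := -q) (by rwa [degree_neg]) (by simpa only [eval_neg, abs_neg] using h)
  rw [iterate_map_neg, eval_neg] at this
  linarith

theorem abs_eval_iterate_derivative_le_mul_of_forall_abs_le (k : ℕ) {x : ℝ} (hx : 1 ≤ x)
    (hq : q.natDegree ≤ n) (hS : ∀ y ∈ Icc (-1 : ℝ) 1, |q.eval y| ≤ S) :
    |(derivative^[k] q).eval x| ≤ S * (derivative^[k] (Chebyshev.T ℝ n)).eval x := by
  rcases ((abs_nonneg _).trans (hS 1 (by norm_num))).eq_or_lt with rfl | hS₀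
  · have hq₀ : q = 0 := q.eq_zero_of_infinite_isRoot <|
      (Icc_infinite (by norm_num : (-1 : ℝ) < 1)).mono fun y hy => abs_nonpos_iff.1 (hS y hy)
    simp [hq₀]
  · have := abs_eval_iterate_derivative_le_of_forall_abs_le_one k hx (q := C S⁻¹ * q)
      (natDegree_C_mul_le _ _ |>.trans hq) fun y hy => by
        rw [eval_mul, eval_C, abs_mul, abs_inv, abs_of_pos hS₀]
        exact inv_mul_le_one_of_le₀ (hS y hy) hS₀.le
    rwa [iterate_derivative_C_mul, eval_mul, eval_C, abs_mul, abs_inv, abs_of_pos hS₀,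
      inv_mul_le_iff₀ hS₀] at this

section Affine

variable {s e : ℝ} (hq : q.natDegree ≤ n) (hS : ∀ u ∈ Icc (-1 : ℝ) 1, |q.eval (s * u + e)| ≤ S)
include hq hS

theorem abs_mul_abs_derivative_eval_le_of_affine :
    |s| * |q.derivative.eval (s + e)| ≤ n ^ 2 * S := by
  have := abs_eval_iterate_derivative_le_mul_of_forall_abs_le 1 le_rfl
    (natDegree_comp_linear_le hq s e) fun u hu => by simpa using hS u hu
  simp only [Function.iterate_one, derivative_comp, eval_mul, eval_comp,
    Chebyshev.derivative_T_eval_one, derivative_add, derivative_C_mul_X, derivative_C, add_zero,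
    eval_C, eval_add, eval_X, mul_one, abs_mul, Int.cast_natCast] at this
  linarith

theorem abs_eval_le_mul_T_eval_of_affine {u : ℝ} (hu : 1 ≤ u) :
    |q.eval (s * u + e)| ≤ S * (Chebyshev.T ℝ n).eval u := by
  have := abs_eval_iterate_derivative_le_mul_of_forall_abs_le 0 hu
    (natDegree_comp_linear_le hq s e) fun u hu => by simpa using hS u hu
  simpa using this

end Affine

section Interval

variable {a b : ℝ} (hq : q.natDegree ≤ n) (hS : ∀ y ∈ Icc a b, |q.eval y| ≤ S)
include hq hS

theorem sub_mul_abs_derivative_eval_le_s9 {x : ℝ} (hx : x ∈ Icc a b) :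
    (b - a) * |q.derivative.eval x| ≤ 4 * n ^ 2 * S := by
  obtain ⟨hax, hxb⟩ := hx
  -- `x` is an endpoint of a subinterval of `[a, b]` of length `(b - a) / 2`
  rcases le_total x ((a + b) / 2) with h | h
  · have := abs_mul_abs_derivative_eval_le_of_affine (s := -((b - a) / 4)) (e := x + (b - a) / 4)
      hq fun u hu => hS _ ⟨by nlinarith [hu.2], by nlinarith [hu.1]⟩
    rw [abs_neg, abs_of_nonneg (by linarith), neg_add_cancel_comm_assoc] at this
    linarith
  · have := abs_mul_abs_derivative_eval_le_of_affine (s := (b - a) / 4) (e := x - (b - a) / 4)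
      hq fun u hu => hS _ ⟨by nlinarith [hu.1], by nlinarith [hu.2]⟩
    rw [abs_of_nonneg (by linarith), add_sub_cancel] at this
    linarith

theorem sub_mul_abs_eval_sub_le {x y : ℝ} (hx : x ∈ Icc a b) (hy : y ∈ Icc a b) :
    (b - a) * |q.eval y - q.eval x| ≤ 4 * n ^ 2 * S * |y - x| := by
  have hS₀ : 0 ≤ S := (abs_nonneg _).trans (hS x hx)
  rcases (sub_nonneg.2 (hx.1.trans hx.2)).eq_or_lt with h | h
  · rw [← h, zero_mul]
    positivity
  have hderiv (z : ℝ) (hz : z ∈ Icc a b) :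
      ‖deriv (fun t => q.eval t) z‖ ≤ 4 * n ^ 2 * S / (b - a) := by
    rw [Polynomial.deriv, Real.norm_eq_abs, le_div_iff₀ h, mul_comm]
    exact sub_mul_abs_derivative_eval_le_s9 hq hS hz
  have := Convex.norm_image_sub_le_of_norm_deriv_le (fun z _ => q.differentiableAt) hderiv
    (convex_Icc a b) hx hy
  rw [Real.norm_eq_abs, Real.norm_eq_abs, div_mul_eq_mul_div, le_div_iff₀ h] at this
  linarith

theorem abs_eval_le_mul_T_eval_of_le (hab : a < b) {x : ℝ} (hx : x ≤ a) :
    |q.eval x| ≤ S * (Chebyshev.T ℝ n).eval (1 + 2 * (a - x) / (b - a)) := by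
  have := abs_eval_le_mul_T_eval_of_affine (s := (a - b) / 2) (e := (a + b) / 2) hq
    (fun u hu => hS _ ⟨by nlinarith [hu.2], by nlinarith [hu.1]⟩)
    (u := 1 + 2 * (a - x) / (b - a)) (le_add_of_nonneg_right (by bound))
  rwa [show (a - b) / 2 * (1 + 2 * (a - x) / (b - a)) + (a + b) / 2 = x by
    field_simp [(sub_pos.2 hab).ne']; ring] at this

theorem abs_eval_sub_half_le (hab : a < b) (hlen : 8 * (n : ℝ) ^ 2 ≤ b - a) :
    |q.eval (a - 1 / 2)| ≤ 8 / 7 * S := by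
  have hba : 0 < b - a := sub_pos.2 hab
  have hgrowth := abs_eval_le_mul_T_eval_of_le hq hS hab (x := a - 1 / 2) (by linarith)
  rw [show 2 * (a - (a - 1 / 2)) / (b - a) = 1 / (b - a) by ring] at hgrowth
  have harg : n * √(2 * (1 / (b - a))) ≤ 1 / 2 := by
    refine (pow_le_pow_iff_left₀ (by positivity) (by norm_num) two_ne_zero).1 ?_
    rw [mul_pow, sq_sqrt (by positivity)]
    field_simp
    linarith
  have hcosh : cosh (n * √(2 * (1 / (b - a)))) ≤ 8 / 7 := calc
    _ ≤ cosh (1 / 2) := cosh_le_cosh.2 <| by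
      rwa [abs_of_nonneg (by positivity), abs_of_nonneg (by norm_num)]
    _ ≤ exp ((1 / 2) ^ 2 / 2) := cosh_le_exp_half_sq _
    _ ≤ 1 / (1 - (1 / 2) ^ 2 / 2) := exp_bound_div_one_sub_of_interval (by norm_num) (by norm_num)
    _ = 8 / 7 := by norm_num
  have hS₀ : 0 ≤ S := (abs_nonneg _).trans (hS a ⟨le_rfl, hab.le⟩)
  calc |q.eval (a - 1 / 2)| ≤ S * (Chebyshev.T ℝ n).eval (1 + 1 / (b - a)) := hgrowth
    _ ≤ S * (8 / 7) := by
      gcongr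
      exact (Chebyshev.T_real_eval_one_add_le_cosh n (by positivity)).trans hcosh
    _ = 8 / 7 * S := mul_comm _ _

end Interval

theorem sub_sub_mul_abs_eval_le_of_forall_int (hq : q.natDegree ≤ n) {a b : ℤ} {B : ℝ}
    (hB : ∀ k : ℤ, a ≤ k → k ≤ b → |q.eval (k : ℝ)| ≤ B) {x : ℝ} (hx : x ∈ Icc (a : ℝ) b) :
    (b - a - 2 * n ^ 2) * |q.eval x| ≤ (b - a) * B := by
  obtain ⟨ξ, hξ, hmax⟩ := isCompact_Icc.exists_isMaxOn (nonempty_of_mem hx)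
    (q.continuous.abs.continuousOn)
  set S := |q.eval ξ|
  have hS (y : ℝ) (hy : y ∈ Icc (a : ℝ) b) : |q.eval y| ≤ S := hmax hy
  -- the maximum of `|q|` is attained within `1 / 2` of an integer point
  obtain ⟨hk₁, hk₂⟩ := round_mem_Icc hξ
  have hclose : (b - a) * |q.eval ξ - q.eval (round ξ : ℝ)| ≤ 2 * n ^ 2 * S := calc
    _ ≤ 4 * n ^ 2 * S * |ξ - round ξ| :=
      sub_mul_abs_eval_sub_le hq hS ⟨by exact_mod_cast hk₁, by exact_mod_cast hk₂⟩ hξ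
    _ ≤ 4 * n ^ 2 * S * (1 / 2) := by gcongr; exact abs_sub_round ξ
    _ = 2 * n ^ 2 * S := by ring
  have hSB : S ≤ B + |q.eval ξ - q.eval (round ξ : ℝ)| := by
    linarith [abs_sub_abs_le_abs_sub (q.eval ξ) (q.eval (round ξ : ℝ)), hB _ hk₁ hk₂]
  have hB₀ : 0 ≤ B := (abs_nonneg _).trans (hB _ hk₁ hk₂)
  have hba : (0 : ℝ) ≤ b - a := sub_nonneg.2 (hx.1.trans hx.2)
  rcases le_total 0 (b - a - 2 * n ^ 2 : ℝ) with h | h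
  · calc (b - a - 2 * n ^ 2) * |q.eval x| ≤ (b - a - 2 * n ^ 2) * S := by gcongr; exact hS x hx
      _ ≤ (b - a) * B := by nlinarith
  · nlinarith [abs_nonneg (q.eval x)]

theorem abs_eval_le_of_forall_int (hq : q.natDegree ≤ n) {a b : ℤ}
    (hab : 12 * (n : ℝ) ^ 2 < b - a) {B : ℝ} (hB : ∀ k : ℤ, a ≤ k → k ≤ b → |q.eval (k : ℝ)| ≤ B)
    {x : ℝ} (hx : x ∈ Icc (a : ℝ) b) : |q.eval x| ≤ 6 / 5 * B := by
  have := sub_sub_mul_abs_eval_le_of_forall_int hq hB hx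
  have hB₀ : 0 ≤ B := (abs_nonneg _).trans (hB a le_rfl (by exact_mod_cast hx.1.trans hx.2))
  have hpos : (0 : ℝ) < b - a - 2 * n ^ 2 := by nlinarith
  refine le_of_mul_le_mul_left ?_ hpos
  nlinarith

end Polynomial

namespace MvPolynomial

section Restriction

variable {σ R : Type*} [CommSemiring R]

theorem totalDegree_ne_zero_of_eval_ne {p : MvPolynomial σ R} {x y : σ → R}
    (h : eval x p ≠ eval y p) : p.totalDegree ≠ 0 := fun h0 => by
  rw [totalDegree_eq_zero_iff_eq_C.1 h0, eval_C, eval_C] at h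
  exact h rfl

theorem eval_aeval_eq_eval (f : σ → R[X]) (p : MvPolynomial σ R) (x : R) :
    (aeval f p).eval x = eval (fun i => (f i).eval x) p := by
  rw [aeval_def, polynomial_eval_eval₂, ← coe_eval₂Hom]
  congr
  ext
  simp

theorem natDegree_aeval_le_totalDegree {f : σ → R[X]} (hf : ∀ i, (f i).natDegree ≤ 1)
    (p : MvPolynomial σ R) : (aeval f p).natDegree ≤ p.totalDegree := by
  rw [aeval_def, eval₂_eq]
  refine natDegree_sum_le_of_forall_le _ _ fun m hm => (natDegree_C_mul_le _ _).trans ?_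
  refine (natDegree_prod_le _ _).trans <| le_trans ?_ (le_totalDegree hm)
  exact Finset.sum_le_sum fun i _ =>
    natDegree_pow_le.trans (by simpa using Nat.mul_le_mul_left (m i) (hf i))

theorem eval_aeval_C_X (p : MvPolynomial (Fin 2) R) (a z : R) :
    (aeval ![Polynomial.C a, Polynomial.X] p).eval z = eval ![a, z] p := by
  rw [eval_aeval_eq_eval]
  congr
  ext i
  fin_cases i <;> simp

theorem eval_aeval_X_C (p : MvPolynomial (Fin 2) R) (a z : R) :
    (aeval ![Polynomial.X, Polynomial.C a] p).eval z = eval ![z, a] p := by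
  rw [eval_aeval_eq_eval]
  congr
  ext i
  fin_cases i <;> simp

end Restriction

theorem abs_eval_le_of_forall_int_mem_rectangle {p : MvPolynomial (Fin 2) ℝ} {n : ℕ}
    (hp : p.totalDegree ≤ n) {A B C D : ℤ} (hAB : 12 * (n : ℝ) ^ 2 < B - A)
    (hCD : 12 * (n : ℝ) ^ 2 < D - C) {K : ℝ}
    (hK : ∀ x y : ℤ, A ≤ x → x ≤ B → C ≤ y → y ≤ D → |eval ![(x : ℝ), (y : ℝ)] p| ≤ K)
    {x y : ℝ} (hx : x ∈ Icc (A : ℝ) B) (hy : y ∈ Icc (C : ℝ) D) :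
    |eval ![x, y] p| ≤ 36 / 25 * K := by
  have hline (f : Fin 2 → ℝ[X]) (hf : ∀ i, (f i).natDegree ≤ 1) : (aeval f p).natDegree ≤ n :=
    (natDegree_aeval_le_totalDegree hf p).trans hp
  have hvert (k : ℤ) (hk₁ : A ≤ k) (hk₂ : k ≤ B) : |eval ![(k : ℝ), y] p| ≤ 6 / 5 * K := by
    have := abs_eval_le_of_forall_int (hline ![Polynomial.C (k : ℝ), Polynomial.X]
      (by simp [Fin.forall_fin_two])) hCD
      (fun j hj₁ hj₂ => by rw [eval_aeval_C_X]; exact hK k j hk₁ hk₂ hj₁ hj₂) hy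
    rwa [eval_aeval_C_X] at this
  have := abs_eval_le_of_forall_int (hline ![Polynomial.X, Polynomial.C y]
    (by simp [Fin.forall_fin_two])) hAB
    (fun k hk₁ hk₂ => by rw [eval_aeval_X_C]; exact hvert k hk₁ hk₂) hx
  rw [eval_aeval_X_C] at this
  linarith

section Hyperbola

variable {K : Type*} [Field K]

/-- `p(c t, c t⁻¹) + p(c t⁻¹, c t)` as a polynomial in `t + t⁻¹`: the Dickson polynomial
`dickson 1 1 k` maps `t + t⁻¹` to `t ^ k + t⁻¹ ^ k`. -/
noncomputable def symmHyperbola (p : MvPolynomial (Fin 2) K) (c : K) : K[X] :=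
  ∑ m ∈ p.support, Polynomial.C (p.coeff m * c ^ (m 0 + m 1)) * dickson 1 1 (Nat.dist (m 0) (m 1))

theorem natDegree_symmHyperbola_le (p : MvPolynomial (Fin 2) K) (c : K) :
    (symmHyperbola p c).natDegree ≤ p.totalDegree := by
  refine natDegree_sum_le_of_forall_le _ _ fun m hm => (natDegree_C_mul_le _ _).trans ?_
  refine (natDegree_dickson_one_one_le _).trans <| le_trans ?_ (le_totalDegree hm)
  rw [Finsupp.sum_fintype _ _ fun _ => rfl, Fin.sum_univ_two]
  unfold Nat.dist
  omega

theorem eval_symmHyperbola (p : MvPolynomial (Fin 2) K) (c : K) {t : K} (ht : t ≠ 0) :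
    (symmHyperbola p c).eval (t + t⁻¹) = eval ![c * t, c * t⁻¹] p + eval ![c * t⁻¹, c * t] p := by
  rw [symmHyperbola, eval_finsetSum, eval_eq', eval_eq', ← Finset.sum_add_distrib]
  refine Finset.sum_congr rfl fun m _ => ?_
  rw [Polynomial.eval_mul, Polynomial.eval_C,
    dickson_one_one_eval_add_inv _ _ (mul_inv_cancel₀ ht), pow_dist_add_inv_pow_dist ht,
    Fin.prod_univ_two, Fin.prod_univ_two]
  simp only [Matrix.cons_val_zero, Matrix.cons_val_one, mul_pow, pow_add]
  ring

theorem eval_two_symmHyperbola (p : MvPolynomial (Fin 2) K) (c : K) :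
    (symmHyperbola p c).eval 2 = 2 * eval ![c, c] p := by
  have := eval_symmHyperbola p c one_ne_zero
  rw [inv_one, mul_one, one_add_one_eq_two] at this
  rw [this, two_mul]

end Hyperbola

theorem abs_eval_symmHyperbola_le (p : MvPolynomial (Fin 2) ℝ) {w X τ M : ℝ} (hw : 0 ≤ w)
    (hτ : 2 ≤ τ) (hX : 2 * w * τ ≤ X)
    (hM : ∀ x ∈ Icc (2 * w) X, ∀ y ∈ Icc 0 w, |eval ![x, y] p| ≤ M ∧ |eval ![y, x] p| ≤ M)
    {s : ℝ} (hs : s ∈ Icc (5 / 2) (τ + τ⁻¹)) : |(symmHyperbola p (2 * w)).eval s| ≤ 2 * M := by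
  have hcont : ContinuousOn (fun t : ℝ => t + t⁻¹) (Icc 2 τ) :=
    continuousOn_id.add (continuousOn_inv₀.mono fun t ht => (two_pos.trans_le ht.1).ne')
  obtain ⟨t, ⟨ht₂, htτ⟩, rfl⟩ := intermediate_value_Icc hτ hcont (by norm_num; exact hs)
  have ht₀ : 0 < t := two_pos.trans_le ht₂
  have hx : 2 * w * t ∈ Icc (2 * w) X := ⟨by nlinarith, by nlinarith⟩
  have hy : 2 * w * t⁻¹ ∈ Icc 0 w := by
    refine ⟨by positivity, ?_⟩
    rw [← div_eq_mul_inv, div_le_iff₀ ht₀]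
    nlinarith
  rw [eval_symmHyperbola p _ ht₀.ne']
  obtain ⟨h₁, h₂⟩ := hM _ hx _ hy
  linarith [abs_add_le (eval ![2 * w * t, 2 * w * t⁻¹] p) (eval ![2 * w * t⁻¹, 2 * w * t] p)]

theorem abs_eval_le_of_forall_int_mem_rectangles {p : MvPolynomial (Fin 2) ℝ} {n : ℕ}
    (hp : p.totalDegree ≤ n) {w N : ℤ} (hw : 12 * (n : ℝ) ^ 2 < w)
    (hN : 12 * (n : ℝ) ^ 2 < N - 2 * w)
    (h : ∀ x y : ℤ, ((2 * w ≤ x ∧ x ≤ N ∧ 0 ≤ y ∧ y ≤ w) ∨ (0 ≤ x ∧ x ≤ w ∧ 2 * w ≤ y ∧ y ≤ N)) →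
      0 ≤ eval ![(x : ℝ), (y : ℝ)] p ∧ eval ![(x : ℝ), (y : ℝ)] p ≤ 1) :
    ∀ x ∈ Icc (2 * (w : ℝ)) N, ∀ y ∈ Icc 0 (w : ℝ),
      |eval ![x, y] p| ≤ 36 / 25 ∧ |eval ![y, x] p| ≤ 36 / 25 := by
  have habs (x y : ℤ) (hxy : _) : |eval ![(x : ℝ), (y : ℝ)] p| ≤ 1 :=
    abs_le.2 ⟨by linarith [(h x y hxy).1], (h x y hxy).2⟩
  intro x hx y hy
  have hx' : x ∈ Icc ((2 * w : ℤ) : ℝ) N := by push_cast; exact hx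
  have hy' : y ∈ Icc ((0 : ℤ) : ℝ) w := by push_cast; exact hy
  have h₁ := abs_eval_le_of_forall_int_mem_rectangle hp (by push_cast; linarith)
    (by push_cast; linarith) (fun x y h₁ h₂ h₃ h₄ => habs x y (Or.inl ⟨h₁, h₂, h₃, h₄⟩)) hx' hy'
  have h₂ := abs_eval_le_of_forall_int_mem_rectangle hp (by push_cast; linarith)
    (by push_cast; linarith) (fun x y h₁ h₂ h₃ h₄ => habs x y (Or.inr ⟨h₁, h₂, h₃, h₄⟩)) hy' hx'
  constructor <;> linarith

end MvPolynomial

open MvPolynomial in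
/-- **Main degree lower bound (Theorem 3.1).** There is an absolute constant `c > 0`
such that: for positive integers `w, N` with `2w ≤ N ≤ 4w³`, and any real bivariate
polynomial `p` of total degree `d` with `p(2w, 2w) ≥ 2` and `0 ≤ p(x, y) ≤ 1` at all
integer points of `([2w,N] × [0,w]) ∪ ([0,w] × [2w,N])`, we have
`d ≥ c · min(sqrt w, sqrt(N/w))`. -/
theorem main_degree_lower_bound :
    ∃ c : ℝ, 0 < c ∧
      ∀ (w N : ℤ) (p : MvPolynomial (Fin 2) ℝ),
        0 < w → 2 * w ≤ N → N ≤ 4 * w ^ 3 →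
        MvPolynomial.eval ![2 * (w : ℝ), 2 * (w : ℝ)] p ≥ 2 →
        (∀ x y : ℤ,
          ((2 * w ≤ x ∧ x ≤ N ∧ 0 ≤ y ∧ y ≤ w) ∨
           (0 ≤ x ∧ x ≤ w ∧ 2 * w ≤ y ∧ y ≤ N)) →
          0 ≤ MvPolynomial.eval ![(x : ℝ), (y : ℝ)] p ∧
            MvPolynomial.eval ![(x : ℝ), (y : ℝ)] p ≤ 1) →
        (p.totalDegree : ℝ) ≥
          c * min (Real.sqrt w) (Real.sqrt ((N : ℝ) / w)) := by
  refine ⟨1 / 10, by norm_num, fun w N p hw h2w _ hval hbox => ?_⟩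
  set d := p.totalDegree
  have hd : (1 : ℝ) ≤ d := by
    have := (hbox (2 * w) 0 (Or.inl ⟨le_rfl, h2w, le_rfl, hw.le⟩)).2
    push_cast at this
    exact_mod_cast Nat.one_le_iff_ne_zero.2 <| totalDegree_ne_zero_of_eval_ne
      (x := ![2 * (w : ℝ), 2 * w]) (y := ![2 * (w : ℝ), 0]) (by linarith)
  have hw₁ : (1 : ℝ) ≤ w := by exact_mod_cast hw
  by_contra! hlt
  obtain ⟨hw', hN'⟩ := sq_lt_of_lt_min_sqrt (x := 10 * d) (w := w) (N := N) (by positivity)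
    (by positivity) (by linarith)
  have hdw : (d : ℝ) ^ 2 ≤ d ^ 2 * w := le_mul_of_one_le_right (by positivity) hw₁
  have hwd : (w : ℝ) ≤ d ^ 2 * w := le_mul_of_one_le_left (by positivity) (one_le_pow₀ hd)
  have hM := abs_eval_le_of_forall_int_mem_rectangles (le_refl d) (by nlinarith) (by nlinarith) hbox
  -- `[5/2, τ + τ⁻¹]` has length at least `8 d ^ 2`, and `2 w τ ≤ N`
  set τ : ℝ := 8 * d ^ 2 + 3 with hτ
  have hτ₀ : 0 ≤ τ⁻¹ := by positivity
  have := abs_eval_sub_half_le (a := 5 / 2) (b := τ + τ⁻¹) (natDegree_symmHyperbola_le p _)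
    (fun s hs => abs_eval_symmHyperbola_le p (by positivity) (by nlinarith) (by nlinarith) hM hs)
    (by nlinarith) (by linarith)
  norm_num [eval_two_symmHyperbola] at this
  linarith [le_abs_self (eval ![2 * (w : ℝ), 2 * w] p)]
end

section
/- Let q be a real polynomial of degree d, and suppose there exist reals A < B with B - A = k ≥ 1 such that |q(s)| ≤ 1.001² for all s ∈ [A, B], while q(s₀) ≥ 2 for some s₀ < A with A - s₀ ≤ (B-A)/k' for k' ≥ k. Then d ≥ c·sqrt(k) for an absolute constant c > 0. -/
open Polynomial Finset Real

namespace FinalStepAux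

open Polynomial.Chebyshev

lemma natDegree_T_le (n : ℕ) : (T ℝ (n : ℤ)).natDegree ≤ n := by
  have key : ∀ m : ℕ, (T ℝ (m : ℤ)).natDegree ≤ m ∧ (T ℝ ((m : ℤ) + 1)).natDegree ≤ m + 1 := by
    intro m
    induction m with
    | zero =>
      constructor
      · simp [Polynomial.Chebyshev.T_zero]
      · simp [Polynomial.Chebyshev.T_one]
    | succ m ih =>
      refine ⟨by exact_mod_cast ih.2, ?_⟩
      have hcast : (((m + 1 : ℕ) : ℤ) + 1) = (m : ℤ) + 2 := by push_cast; ring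
      rw [hcast, Polynomial.Chebyshev.T_add_two]
      have h2X : (2 * X : ℝ[X]).natDegree ≤ 1 :=
        le_trans Polynomial.natDegree_mul_le (by simp)
      calc (2 * X * T ℝ ((m : ℤ) + 1) - T ℝ (m : ℤ)).natDegree
          ≤ max (2 * X * T ℝ ((m : ℤ) + 1)).natDegree (T ℝ (m : ℤ)).natDegree :=
            Polynomial.natDegree_sub_le _ _
        _ ≤ m + 1 + 1 := by
            apply max_le
            · calc (2 * X * T ℝ ((m : ℤ) + 1)).natDegree
                  ≤ (2 * X : ℝ[X]).natDegree + (T ℝ ((m : ℤ) + 1)).natDegree :=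
                    Polynomial.natDegree_mul_le
                _ ≤ 1 + (m + 1) := add_le_add h2X ih.2
                _ = m + 1 + 1 := by ring
            · exact le_trans ih.1 (by omega)
  exact (key n).1

lemma T_real_cosh (t : ℝ) (n : ℕ) :
    (T ℝ (n : ℤ)).eval (Real.cosh t) = Real.cosh ((n : ℝ) * t) := by
  have h := Polynomial.Chebyshev.T_complex_cos ((t : ℂ) * Complex.I) (n : ℤ)
  rw [Complex.cos_mul_I] at h
  rw [show ((n : ℤ) : ℂ) * ((t : ℂ) * Complex.I) = (((n : ℝ) * t : ℝ) : ℂ) * Complex.I by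
      push_cast; ring, Complex.cos_mul_I] at h
  exact_mod_cast h

lemma cheb_bound (n : ℕ) (hn : 0 < n) (p : ℝ[X]) (hdeg : p.natDegree ≤ n) (M : ℝ)
    (hM : ∀ x ∈ Set.Icc (-1 : ℝ) 1, |p.eval x| ≤ M) {y : ℝ} (hy : 1 < y) :
    p.eval y ≤ M * (T ℝ (n : ℤ)).eval y := by
  have hn0 : (n : ℝ) ≠ 0 := Nat.cast_ne_zero.mpr hn.ne'
  have hnpos : (0 : ℝ) < n := Nat.cast_pos.mpr hn
  set v : ℕ → ℝ := fun i => Real.cos ((i : ℝ) * π / n) with hv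
  set s : Finset ℕ := Finset.range (n + 1) with hs
  have pi_pos := Real.pi_pos
  have hmem : ∀ i : ℕ, i ≤ n → (i : ℝ) * π / n ∈ Set.Icc 0 π := by
    intro i hi
    constructor
    · positivity
    · rw [div_le_iff₀ hnpos]
      have : (i : ℝ) ≤ n := Nat.cast_le.mpr hi
      nlinarith
  have hanti : ∀ i j : ℕ, i ≤ n → j ≤ n → i < j → v j < v i := by
    intro i j hi hj hij
    apply Real.strictAntiOn_cos (hmem i hi) (hmem j hj)
    have : (i : ℝ) < j := Nat.cast_lt.mpr hij
    gcongr
  have hvmem : ∀ i : ℕ, v i ∈ Set.Icc (-1 : ℝ) 1 := fun i =>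
    ⟨Real.neg_one_le_cos _, Real.cos_le_one _⟩
  have hvlty : ∀ i : ℕ, v i < y := fun i => lt_of_le_of_lt (hvmem i).2 hy
  have hvs : Set.InjOn v s := by
    intro a ha b hb hab
    have ha' : a ≤ n := Nat.lt_succ_iff.mp (Finset.mem_range.mp ha)
    have hb' : b ≤ n := Nat.lt_succ_iff.mp (Finset.mem_range.mp hb)
    by_contra hne
    rcases lt_or_gt_of_ne hne with h | h
    · exact (ne_of_gt (hanti a b ha' hb' h)) hab
    · exact (ne_of_lt (hanti b a hb' ha' h)) hab
  have hcard : #s = n + 1 := Finset.card_range _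
  have hdegp : p.degree < (#s : ℕ) := by
    rw [hcard]
    exact lt_of_le_of_lt Polynomial.degree_le_natDegree
      (by exact_mod_cast Nat.lt_succ_of_le hdeg)
  have hdegT : (T ℝ (n : ℤ)).degree < (#s : ℕ) := by
    rw [hcard]
    exact lt_of_le_of_lt Polynomial.degree_le_natDegree
      (by exact_mod_cast Nat.lt_succ_of_le (natDegree_T_le n))
  -- sign of basis polynomials at y
  have hsign : ∀ i ∈ s, 0 ≤ (-1 : ℝ) ^ i * (Lagrange.basis s v i).eval y := by
    intro i hi
    have hi' : i ≤ n := Nat.lt_succ_iff.mp (Finset.mem_range.mp hi)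
    set g : ℕ → ℝ := fun j => (v i - v j)⁻¹ * (y - v j) with hg
    have heval : (Lagrange.basis s v i).eval y = ∏ j ∈ s.erase i, g j := by
      simp [Lagrange.basis, Polynomial.eval_prod, Lagrange.basisDivisor, hg]
    have hsplit : ∏ j ∈ s.erase i, g j =
        (∏ j ∈ (s.erase i).filter (· < i), g j) *
        ∏ j ∈ (s.erase i).filter (fun j => ¬ j < i), g j :=
      (Finset.prod_filter_mul_prod_filter_not _ _ _).symm
    have htset : (s.erase i).filter (· < i) = Finset.range i := by
      ext j
      simp only [Finset.mem_filter, Finset.mem_erase, Finset.mem_range, hs]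
      omega
    have hneg : ∀ j ∈ Finset.range i, 0 ≤ -(g j) := by
      intro j hj
      have hj' : j < i := Finset.mem_range.mp hj
      have h1 : v i < v j := hanti j i (le_of_lt (lt_of_lt_of_le hj' hi')) hi' hj'
      have h2 : (v i - v j)⁻¹ < 0 := inv_lt_zero.mpr (by linarith)
      have h3 : 0 < y - v j := by linarith [hvlty j]
      rw [hg]
      simp only
      nlinarith
    have hpos : ∀ j ∈ (s.erase i).filter (fun j => ¬ j < i), 0 ≤ g j := by
      intro j hj
      simp only [Finset.mem_filter, Finset.mem_erase] at hj
      have hij : i < j := lt_of_le_of_ne (not_lt.mp hj.2) (Ne.symm hj.1.1)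
      have hj' : j ≤ n := Nat.lt_succ_iff.mp (Finset.mem_range.mp hj.1.2)
      have h1 : v j < v i := hanti i j hi' hj' hij
      have h2 : 0 < (v i - v j)⁻¹ := inv_pos.mpr (by linarith)
      have h3 : 0 < y - v j := by linarith [hvlty j]
      positivity
    have hflip : ∏ j ∈ Finset.range i, g j =
        (-1 : ℝ) ^ i * ∏ j ∈ Finset.range i, (-(g j)) := by
      have h1 : ∏ j ∈ Finset.range i, (-(g j)) =
          (-1 : ℝ) ^ i * ∏ j ∈ Finset.range i, g j := by
        calc ∏ j ∈ Finset.range i, (-(g j)) = ∏ j ∈ Finset.range i, ((-1) * g j) := by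
              simp [neg_one_mul]
          _ = (∏ _j ∈ Finset.range i, (-1 : ℝ)) * ∏ j ∈ Finset.range i, g j :=
              Finset.prod_mul_distrib
          _ = (-1 : ℝ) ^ i * ∏ j ∈ Finset.range i, g j := by
              rw [Finset.prod_const, Finset.card_range]
      rw [h1, ← mul_assoc, ← mul_pow]
      norm_num
    have hone : (-1 : ℝ) ^ i * (-1 : ℝ) ^ i = 1 := by
      rw [← mul_pow]; norm_num
    rw [heval, hsplit, htset, hflip]
    rw [show (-1 : ℝ) ^ i * ((-1 : ℝ) ^ i * (∏ j ∈ Finset.range i, (-(g j))) *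
        ∏ j ∈ (s.erase i).filter (fun j => ¬ j < i), g j)
        = ((-1 : ℝ) ^ i * (-1 : ℝ) ^ i) * ((∏ j ∈ Finset.range i, (-(g j))) *
        ∏ j ∈ (s.erase i).filter (fun j => ¬ j < i), g j) from by ring, hone, one_mul]
    exact mul_nonneg (Finset.prod_nonneg hneg) (Finset.prod_nonneg hpos)
  -- value of T at the nodes
  have hTnode : ∀ i ∈ s, (T ℝ (n : ℤ)).eval (v i) = (-1 : ℝ) ^ i := by
    intro i hi
    rw [hv]
    simp only
    rw [Polynomial.Chebyshev.T_real_cos]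
    have harg : ((n : ℤ) : ℝ) * ((i : ℝ) * π / n) = (i : ℝ) * π := by
      push_cast
      field_simp
    rw [harg, show (i : ℝ) * π = (i : ℝ) * π - 0 by ring, Real.cos_nat_mul_pi_sub,
      Real.cos_zero, mul_one]
  -- interpolation identities
  have hpsum : p.eval y = ∑ i ∈ s, p.eval (v i) * (Lagrange.basis s v i).eval y := by
    conv_lhs => rw [Lagrange.eq_interpolate hvs hdegp]
    simp [Lagrange.interpolate_apply, Polynomial.eval_finset_sum]
  have hTsum : (T ℝ (n : ℤ)).eval y =
      ∑ i ∈ s, (-1 : ℝ) ^ i * (Lagrange.basis s v i).eval y := by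
    conv_lhs => rw [Lagrange.eq_interpolate hvs hdegT]
    rw [Lagrange.interpolate_apply, Polynomial.eval_finset_sum]
    refine Finset.sum_congr rfl fun i hi => ?_
    rw [Polynomial.eval_mul, Polynomial.eval_C, hTnode i hi]
  rw [hpsum, hTsum, Finset.mul_sum]
  refine Finset.sum_le_sum fun i hi => ?_
  have hb := hsign i hi
  set b := (Lagrange.basis s v i).eval y with hbdef
  have habs : |b| = (-1 : ℝ) ^ i * b := by
    have : |(-1 : ℝ) ^ i * b| = (-1 : ℝ) ^ i * b := abs_of_nonneg hb
    rwa [abs_mul, abs_pow, abs_neg, abs_one, one_pow, one_mul] at this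
  calc p.eval (v i) * b ≤ |p.eval (v i) * b| := le_abs_self _
    _ = |p.eval (v i)| * |b| := abs_mul _ _
    _ ≤ M * |b| := mul_le_mul_of_nonneg_right (hM _ (hvmem i)) (abs_nonneg _)
    _ = M * ((-1 : ℝ) ^ i * b) := by rw [habs]

end FinalStepAux

set_option maxHeartbeats 1000000 in
/-- Final step of the main theorem: there is an absolute constant `c > 0` such that if
`q` has degree `d`, `|q(s)| ≤ 1.001²` on `[A, B]` with `B - A = k ≥ 1`, and `q(s₀) ≥ 2`
for some `s₀ < A` with `A - s₀ ≤ (B - A)/k'` where `k' ≥ k`, then `d ≥ c·sqrt(k)`. -/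
theorem final_step :
    ∃ c : ℝ, 0 < c ∧
      ∀ (q : Polynomial ℝ) (d : ℕ) (A B k k' s₀ : ℝ),
        q.natDegree = d → B - A = k → 1 ≤ k → k ≤ k' →
        (∀ s ∈ Set.Icc A B, |q.eval s| ≤ 1.001 ^ 2) →
        s₀ < A → A - s₀ ≤ (B - A) / k' → q.eval s₀ ≥ 2 →
        (d : ℝ) ≥ c * Real.sqrt k := by
  refine ⟨1 / 2, by norm_num, ?_⟩
  intro q d A B k k' s₀ hdeg hBA hk1 hkk' hbound hs₀A hclose hval
  have hk0 : (0 : ℝ) < k := lt_of_lt_of_le one_pos hk1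
  have hk'0 : (0 : ℝ) < k' := lt_of_lt_of_le hk0 hkk'
  have hsk : 0 < Real.sqrt k := Real.sqrt_pos.mpr hk0
  have hB : B = A + k := by linarith
  set M : ℝ := 1.001 ^ 2 with hM
  have hM0 : (0 : ℝ) < M := by rw [hM]; norm_num
  set lin : Polynomial ℝ := Polynomial.C (-(k / 2)) * Polynomial.X + Polynomial.C ((A + B) / 2)
    with hlin
  set p := q.comp lin with hp
  have hlineval : ∀ x : ℝ, lin.eval x = -(k / 2) * x + (A + B) / 2 := by
    intro x; simp [hlin]
  have hpd : p.natDegree = d := by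
    rw [hp, Polynomial.natDegree_comp, hlin, Polynomial.natDegree_linear (by linarith : -(k/2) ≠ 0),
      hdeg, mul_one]
  have hpb : ∀ x ∈ Set.Icc (-1 : ℝ) 1, |p.eval x| ≤ M := by
    intro x hx
    rw [hp, Polynomial.eval_comp, hlineval]
    apply hbound
    constructor
    · nlinarith [hx.2]
    · nlinarith [hx.1]
  set y : ℝ := 1 + 2 * (A - s₀) / k with hy
  have hy1 : 1 < y := by
    rw [hy]
    have : 0 < 2 * (A - s₀) / k := div_pos (by linarith) hk0
    linarith
  have hyle : y ≤ 1 + 2 / k := by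
    rw [hy]
    have h1 : A - s₀ ≤ k / k' := by rw [← hBA]; exact hclose
    have h2 : k / k' ≤ 1 := by rw [div_le_one hk'0]; exact hkk'
    have h3 : A - s₀ ≤ 1 := le_trans h1 h2
    have : 2 * (A - s₀) / k ≤ 2 / k := by
      rw [div_le_div_iff₀ hk0 hk0]
      nlinarith
    linarith
  have hpy : p.eval y = q.eval s₀ := by
    rw [hp, Polynomial.eval_comp, hlineval]
    congr 1
    rw [hy, hB]
    field_simp
    ring
  rcases Nat.eq_zero_or_pos d with hd0 | hd1
  · exfalso
    rw [hd0] at hdeg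
    have ha := Polynomial.eq_C_of_natDegree_eq_zero hdeg
    have h1 := hbound A ⟨le_refl A, by linarith⟩
    rw [ha] at h1 hval
    simp at h1 hval
    rw [hM] at *
    have := le_abs_self (q.coeff 0)
    norm_num at h1
    linarith
  · have hT := FinalStepAux.cheb_bound d hd1 p (le_of_eq hpd) M hpb hy1
    set t := Real.arsinh (Real.sqrt (y ^ 2 - 1)) with ht
    have hy0 : 0 < y := by linarith
    have ht0 : 0 ≤ t := Real.arsinh_nonneg_iff.mpr (Real.sqrt_nonneg _)
    have hcosh : Real.cosh t = y := by
      rw [ht, Real.cosh_arsinh, Real.sq_sqrt (by nlinarith : (0:ℝ) ≤ y ^ 2 - 1)]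
      rw [show 1 + (y ^ 2 - 1) = y ^ 2 by ring]
      exact Real.sqrt_sq hy0.le
    have hTy : (Polynomial.Chebyshev.T ℝ (d : ℤ)).eval y = Real.cosh ((d : ℝ) * t) := by
      rw [← hcosh, FinalStepAux.T_real_cosh]
    have h2M : 2 ≤ M * Real.cosh ((d : ℝ) * t) := by
      calc (2 : ℝ) ≤ q.eval s₀ := hval
        _ = p.eval y := hpy.symm
        _ ≤ M * (Polynomial.Chebyshev.T ℝ (d : ℤ)).eval y := hT
        _ = M * Real.cosh ((d : ℝ) * t) := by rw [hTy]
    -- t ≤ 2 / √k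
    have hts : t ≤ 2 / Real.sqrt k := by
      have hct : Real.cosh t = 1 + 2 * Real.sinh (t / 2) ^ 2 := by
        have h1 := Real.cosh_two_mul (t / 2)
        have h2 := Real.cosh_sq (t / 2)
        rw [show 2 * (t / 2) = t by ring] at h1
        linarith
      have hsinh : Real.sinh (t / 2) ^ 2 ≤ 1 / k := by
        rw [hcosh] at hct
        have : y - 1 = 2 * Real.sinh (t / 2) ^ 2 := by linarith
        have h2 : 2 * Real.sinh (t / 2) ^ 2 ≤ 2 / k := by
          rw [← this]; linarith [hyle]
        have h3 : (2 : ℝ) / k = 2 * (1 / k) := by ring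
        rw [h3] at h2
        linarith
      have hle : t / 2 ≤ Real.sinh (t / 2) :=
        Real.self_le_sinh_iff.mpr (by linarith)
      have hsq : (t / 2) ^ 2 ≤ 1 / k := by
        have hs0 : 0 ≤ Real.sinh (t / 2) := by linarith
        nlinarith [hle, hsinh, ht0]
      have : t / 2 ≤ 1 / Real.sqrt k := by
        have h1 : t / 2 = Real.sqrt ((t / 2) ^ 2) := (Real.sqrt_sq (by linarith)).symm
        rw [h1]
        rw [show 1 / Real.sqrt k = Real.sqrt (1 / k) by
          rw [one_div, one_div, Real.sqrt_inv]]
        exact Real.sqrt_le_sqrt hsq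
      have h2 : (2 : ℝ) / Real.sqrt k = 2 * (1 / Real.sqrt k) := by ring
      rw [h2]
      linarith
    have hmono : Real.cosh ((d : ℝ) * t) ≤ Real.cosh ((d : ℝ) * (2 / Real.sqrt k)) := by
      rw [Real.cosh_le_cosh, abs_of_nonneg (by positivity), abs_of_nonneg (by positivity)]
      exact mul_le_mul_of_nonneg_left hts (Nat.cast_nonneg d)
    have hnum : Real.cosh 1 < 2 / M := by
      have h1 : Real.exp 1 < 2.7182818286 := Real.exp_one_lt_d9
      have h2 : Real.exp (-1) < 1 := Real.exp_lt_one_iff.mpr (by norm_num)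
      have hc : Real.cosh 1 < 1.86 := by
        rw [Real.cosh_eq]
        linarith
      have hlast : (1.86 : ℝ) < 2 / M := by
        rw [hM, lt_div_iff₀ (by norm_num : (0:ℝ) < 1.001 ^ 2)]
        norm_num
      linarith
    have hfin : Real.cosh 1 < Real.cosh ((d : ℝ) * (2 / Real.sqrt k)) := by
      calc Real.cosh 1 < 2 / M := hnum
        _ ≤ Real.cosh ((d : ℝ) * t) := by
            rw [div_le_iff₀ hM0]; linarith [h2M]
        _ ≤ _ := hmono
    rw [Real.cosh_lt_cosh, abs_one, abs_of_nonneg (by positivity)] at hfin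
    have hlt : Real.sqrt k < 2 * d := by
      rw [show (d : ℝ) * (2 / Real.sqrt k) = 2 * d / Real.sqrt k by ring,
        lt_div_iff₀ hsk] at hfin
      linarith
    rw [ge_iff_le]
    linarith
end
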